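/- Let θ be an endomorphism of G with matrix (α, β, γ, δ) such that α and δ are bijective and Δ_H := det_H(θ) is bijective (so that θ is bijective and Δ_K := det_K(θ) is bijective). Then for all h ∈ H and k ∈ K, the inverse of θ is given by θ⁻¹(h,k) = (Δ_H⁻¹(h) · f_{c(h)}(b(k)), c(h) · Δ_K⁻¹(k)), where b(k) = (α⁻¹(β(Δ_K⁻¹(k))))⁻¹ and c(h) = (δ⁻¹(γ(Δ_H⁻¹(h))))⁻¹. -/

import Mathlib

/-!
Put `c h = (δ⁻¹ (γ h))⁻¹`. Since `θ (h, 1) = (α h, γ h)` and `θ (1, δ⁻¹ (γ h))` have the same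
`K`-component, `θ (h, c h) = θ (h, 1) · θ (1, δ⁻¹ (γ h))⁻¹ = (Δ_H h, 1)`; dually
`θ ((α⁻¹ (β k))⁻¹, k) = (1, Δ_K k)`. Hence `θ (h, c h · k) = (Δ_H h · β k, δ k)` is triangular
in `(h, k)` with bijective diagonal `Δ_H`, `δ`, so `θ` is bijective. Every preimage of `(1, k)`
has the form `((α⁻¹ (β k'))⁻¹, k')`, which makes `Δ_K` bijective, and then
`θ⁻¹ (h, k) = (Δ_H⁻¹ h, c (Δ_H⁻¹ h)) · ((α⁻¹ (β k'))⁻¹, k')` with `k' = Δ_K⁻¹ k`.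
-/

open Function

namespace SemidirectProduct

variable {N G : Type*} [Group N] [Group G] {φ : G →* MulAut N}

theorem mk_mul_inv_mk_same_right (a b : N) (g : G) :
    (⟨a, g⟩ : N ⋊[φ] G) * ⟨b, g⟩⁻¹ = inl (a * b⁻¹) := by
  ext <;> simp

theorem inv_mul_eq_inr_iff (x y : N ⋊[φ] G) (g : G) :
    x⁻¹ * y = inr g ↔ x.left = y.left ∧ x.right * g = y.right := by
  rw [inv_mul_eq_iff_eq_mul, SemidirectProduct.ext_iff]
  simp [eq_comm]

theorem mk_mul_inr (n : N) (g g' : G) : (⟨n, g⟩ : N ⋊[φ] G) * inr g' = ⟨n, g * g'⟩ := by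
  ext <;> simp

end SemidirectProduct

open SemidirectProduct

section EndomorphismMatrix

variable {H K : Type*} [Group H] [Group K] {f : K →* MulAut H} {θ : H ⋊[f] K →* H ⋊[f] K}
  {α : H → H} {β : K → H} {γ : H → K} {δ : K → K}

def detH (α : H → H) (β : K → H) (γ : H → K) (δi : K → K) (h : H) : H :=
  α h * (β (δi (γ h)))⁻¹

def detK (αi : H → H) (β : K → H) (γ : H → K) (δ : K → K) (k : K) : K :=
  (γ (αi (β k)))⁻¹ * δ k

theorem map_mk_inv_right_eq_inl_detH (hθH : ∀ h, θ (inl h) = ⟨α h, γ h⟩)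
    (hθK : ∀ k, θ (inr k) = ⟨β k, δ k⟩) {δi : K → K} (hδi : RightInverse δi δ) (h : H) :
    θ ⟨h, (δi (γ h))⁻¹⟩ = inl (detH α β γ δi h) := by
  rw [mk_eq_inl_mul_inr, map_inv, map_mul, map_inv, hθH, hθK, hδi, mk_mul_inv_mk_same_right,
    detH]

theorem map_mk_inv_left_eq_inr_detK (hθH : ∀ h, θ (inl h) = ⟨α h, γ h⟩)
    (hθK : ∀ k, θ (inr k) = ⟨β k, δ k⟩) {αi : H → H} (hαi : RightInverse αi α) (k : K) :
    θ ⟨(αi (β k))⁻¹, k⟩ = inr (detK αi β γ δ k) := by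
  rw [mk_eq_inl_mul_inr, map_inv, map_mul, map_inv, hθH, hθK, inv_mul_eq_inr_iff, hαi, detK]
  exact ⟨rfl, mul_inv_cancel_left _ _⟩

theorem map_mk_inv_mul (hθH : ∀ h, θ (inl h) = ⟨α h, γ h⟩)
    (hθK : ∀ k, θ (inr k) = ⟨β k, δ k⟩) {δi : K → K} (hδi : RightInverse δi δ) (h : H) (k : K) :
    θ ⟨h, (δi (γ h))⁻¹ * k⟩ = ⟨detH α β γ δi h * β k, δ k⟩ := by
  rw [← mk_mul_inr, map_mul, map_mk_inv_right_eq_inl_detH hθH hθK hδi, hθK]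
  ext <;> simp

theorem bijective_of_detH (hθH : ∀ h, θ (inl h) = ⟨α h, γ h⟩)
    (hθK : ∀ k, θ (inr k) = ⟨β k, δ k⟩) {δi : K → K} (hδi : LeftInverse δi δ)
    (hδi' : RightInverse δi δ) {ΔHi : H → H} (hΔHi : LeftInverse ΔHi (detH α β γ δi))
    (hΔHi' : RightInverse ΔHi (detH α β γ δi)) : Bijective θ := by
  constructor
  · rintro ⟨h₁, k₁⟩ ⟨h₂, k₂⟩ he
    obtain ⟨k₁, rfl⟩ : ∃ k, k₁ = (δi (γ h₁))⁻¹ * k := ⟨_, (mul_inv_cancel_left _ _).symm⟩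
    obtain ⟨k₂, rfl⟩ : ∃ k, k₂ = (δi (γ h₂))⁻¹ * k := ⟨_, (mul_inv_cancel_left _ _).symm⟩
    rw [map_mk_inv_mul hθH hθK hδi', map_mk_inv_mul hθH hθK hδi', SemidirectProduct.ext_iff] at he
    obtain rfl := hδi.injective he.2
    obtain rfl := hΔHi.injective (mul_right_cancel he.1)
    rfl
  · rintro ⟨x, y⟩
    set h := ΔHi (x * (β (δi y))⁻¹)
    refine ⟨⟨h, (δi (γ h))⁻¹ * δi y⟩, ?_⟩
    rw [map_mk_inv_mul hθH hθK hδi', hΔHi', hδi', inv_mul_cancel_right]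

theorem bijective_detK (hθH : ∀ h, θ (inl h) = ⟨α h, γ h⟩)
    (hθK : ∀ k, θ (inr k) = ⟨β k, δ k⟩) (hθ : Bijective θ) {αi : H → H}
    (hαi : LeftInverse αi α) (hαi' : RightInverse αi α) : Bijective (detK αi β γ δ) := by
  constructor
  · intro k₁ k₂ he
    have h_eq : θ ⟨(αi (β k₁))⁻¹, k₁⟩ = θ ⟨(αi (β k₂))⁻¹, k₂⟩ := by
      simp only [map_mk_inv_left_eq_inr_detK hθH hθK hαi', he]
    exact congrArg right (hθ.injective h_eq)
  · intro y
    obtain ⟨⟨h, k⟩, hx⟩ := hθ.surjective (inr y)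
    have hleft : α h⁻¹ = β k := by
      rw [show (⟨h, k⟩ : H ⋊[f] K) = (inl h⁻¹)⁻¹ * inr k by ext <;> simp, map_mul, map_inv,
        hθH, hθK, inv_mul_eq_inr_iff] at hx
      exact hx.1
    refine ⟨k, inr_injective (φ := f) ?_⟩
    rw [← map_mk_inv_left_eq_inr_detK hθH hθK hαi', ← hleft, hαi, inv_inv, hx]

end EndomorphismMatrix

/-- Let `θ` be an endomorphism of `G = H ⋊[f] K` with matrix
`(α, β, γ, δ)` such that `α` and `δ` are bijective (with two-sided inverses `αi`,
`δi`) and `Δ_H := det_H θ : h ↦ α h * (β (δi (γ h)))⁻¹` is bijective (with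
two-sided inverse `ΔHi`), so that `θ` is bijective and
`Δ_K := det_K θ : k ↦ (γ (αi (β k)))⁻¹ * δ k` is bijective.  Then
`θ⁻¹ (h, k) = (ΔHi h * f (c h) (b k), c h * Δ_K⁻¹ k)` where
`b k = (αi (β (Δ_K⁻¹ k)))⁻¹` and `c h = (δi (γ (ΔHi h)))⁻¹`. -/
theorem inverse_formula
    {H K : Type*} [Group H] [Group K] (f : K →* MulAut H)
    (θ : (H ⋊[f] K) →* (H ⋊[f] K))
    (α : H → H) (β : K → H) (γ : H → K) (δ : K → K)
    (hθH : ∀ h : H, θ ⟨h, 1⟩ = ⟨α h, γ h⟩)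
    (hθK : ∀ k : K, θ ⟨1, k⟩ = ⟨β k, δ k⟩)
    (αi : H → H)
    (hαi : Function.LeftInverse αi α) (hαi' : Function.RightInverse αi α)
    (δi : K → K)
    (hδi : Function.LeftInverse δi δ) (hδi' : Function.RightInverse δi δ)
    (ΔHi : H → H)
    (hΔHi : Function.LeftInverse ΔHi (fun h : H => α h * (β (δi (γ h)))⁻¹))
    (hΔHi' : Function.RightInverse ΔHi (fun h : H => α h * (β (δi (γ h)))⁻¹)) :
    Function.Bijective θ ∧
    Function.Bijective (fun k : K => (γ (αi (β k)))⁻¹ * δ k) ∧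
    (∀ (h : H) (k : K), Function.invFun θ (⟨h, k⟩ : H ⋊[f] K) =
      ⟨ΔHi h * f ((δi (γ (ΔHi h)))⁻¹)
          ((αi (β (Function.invFun (fun k : K => (γ (αi (β k)))⁻¹ * δ k) k)))⁻¹),
        (δi (γ (ΔHi h)))⁻¹ *
          Function.invFun (fun k : K => (γ (αi (β k)))⁻¹ * δ k) k⟩) := by
  have hθ : Bijective θ := bijective_of_detH hθH hθK hδi hδi' hΔHi hΔHi'
  have hΔK : Bijective (detK αi β γ δ) := bijective_detK hθH hθK hθ hαi hαi'
  refine ⟨hθ, hΔK, fun h k => hθ.injective ?_⟩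
  set k' := invFun (detK αi β γ δ) k
  calc θ (invFun θ ⟨h, k⟩) = inl (detH α β γ δi (ΔHi h)) * inr (detK αi β γ δ k') := by
        rw [invFun_eq (hθ.surjective _), show detH α β γ δi (ΔHi h) = h from hΔHi' h,
          invFun_eq (hΔK.surjective k), mk_eq_inl_mul_inr]
    _ = θ (⟨ΔHi h, (δi (γ (ΔHi h)))⁻¹⟩ * ⟨(αi (β k'))⁻¹, k'⟩) := by
        rw [map_mul, map_mk_inv_right_eq_inl_detH hθH hθK hδi',
          map_mk_inv_left_eq_inr_detK hθH hθK hαi']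
    _ = _ := rfl
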